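/- S(G) is E-unitary if and only if G is E-unitary, where an inverse semigroup is E-unitary if es idempotent with e idempotent implies s idempotent. -/

import Mathlib

universe u v

/-- An inverse semigroup: every element has a unique generalized inverse. -/
class InverseSemigroup (G : Type u) extends Semigroup G, Star G where
  mul_star_mul_self : ∀ s : G, s * star s * s = s
  star_mul_self_star : ∀ s : G, star s * s * star s = star s
  star_unique : ∀ s t : G, s * t * s = s → t * s * t = t → t = star s

variable (G : Type u) [InverseSemigroup G]

/-- The defining relations of the prefix expansion S(G). -/
inductive ExpRel : FreeSemigroup G → FreeSemigroup G → Prop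
  | rel1 (s t : G) : ExpRel (.of s * .of t * .of (star t)) (.of (s * t) * .of (star t))
  | rel2 (s t : G) : ExpRel (.of (star s) * .of s * .of t) (.of (star s) * .of (s * t))
  | rel3 (s : G) : ExpRel (.of s * .of (star s) * .of s) (.of s)

/-- The congruence generated by the defining relations. -/
def expCon : Con (FreeSemigroup G) := conGen (ExpRel G)

/-- The prefix expansion S(G) of the inverse semigroup G. -/
def SG : Type u := (expCon G).Quotient

instance : Semigroup (SG G) := Con.semigroup (expCon G)

variable {G}

/-- The canonical generator [s] of S(G). -/
def gen (s : G) : SG G := ((FreeSemigroup.of s : FreeSemigroup G) : (expCon G).Quotient)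

/-- ε_s = [s][s*] in S(G). -/
def eps (s : G) : SG G := gen s * gen (star s)

/-- ε_{s₁}⋯ε_{s_n}·x for a list [s₁,…,s_n]. -/
def epsList (l : List G) (x : SG G) : SG G := (l.map eps).foldr (· * ·) x

/-- ε_A · x for a finite set A ⊆ G. -/
noncomputable def epsSet (A : Finset G) (x : SG G) : SG G := epsList A.toList x

/-- The normal form condition on the pair (A, t). -/
def IsNormalForm (A : Finset G) (t : G) : Prop :=
  t ∈ A ∧ t * star t ∈ A ∧ ∀ a ∈ A, a * star a = t * star t

/-- A partial homomorphism from an inverse semigroup to a semigroup. -/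
structure IsPartialHom {H : Type v} [Semigroup H] (π : G → H) : Prop where
  rel1 : ∀ s t : G, π s * π t * π (star t) = π (s * t) * π (star t)
  rel2 : ∀ s t : G, π (star s) * π s * π t = π (star s) * π (s * t)
  rel3 : ∀ s : G, π s * π (star s) * π s = π s

/-- The natural partial order: x ≤ y iff x = y·e for some idempotent e. -/
def natLE {H : Type v} [Semigroup H] (x y : H) : Prop := ∃ e : H, e * e = e ∧ x = y * e

/-- A filter in an inverse semigroup. -/
def IsFilter (ξ : Set G) : Prop :=
  ξ.Nonempty ∧ ∀ e s : G, e * e = e → (e * s ∈ ξ ↔ e ∈ ξ ∧ s ∈ ξ)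

section Toolkit

variable {G : Type u} [InverseSemigroup G]

lemma isg_sss (s : G) : s * star s * s = s := InverseSemigroup.mul_star_mul_self s

lemma isg_tst (s : G) : star s * s * star s = star s := InverseSemigroup.star_mul_self_star s

lemma isg_star_star (s : G) : star (star s) = s :=
  (InverseSemigroup.star_unique (star s) s (isg_tst s) (isg_sss s)).symm

lemma isg_idem_star {e : G} (h : e * e = e) : star e = e :=
  (InverseSemigroup.star_unique e e (by rw [h, h]) (by rw [h, h])).symm

lemma isg_mul_star_idem (s : G) : (s * star s) * (s * star s) = s * star s := by
  rw [← mul_assoc, isg_sss]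

lemma isg_star_mul_idem (s : G) : (star s * s) * (star s * s) = star s * s := by
  rw [← mul_assoc, isg_tst]

lemma isg_idem_mul {e f : G} (he : e * e = e) (hf : f * f = f) :
    (e * f) * (e * f) = e * f := by
  have ha := isg_tst (e * f)
  set a := star (e * f) with hadef
  have h1 : (e * f) * (f * a * e) * (e * f) = e * f := by
    calc (e * f) * (f * a * e) * (e * f) = e * ((f * f) * a * (e * e)) * f := by
          simp only [mul_assoc]
      _ = e * (f * a * e) * f := by rw [hf, he]
      _ = (e * f) * a * (e * f) := by simp only [mul_assoc]
      _ = e * f := InverseSemigroup.mul_star_mul_self (e * f)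
  have h2 : (f * a * e) * (e * f) * (f * a * e) = f * a * e := by
    calc (f * a * e) * (e * f) * (f * a * e) = f * (a * ((e * e) * (f * f)) * a) * e := by
          simp only [mul_assoc]
      _ = f * (a * (e * f) * a) * e := by rw [he, hf]
      _ = f * a * e := by rw [ha]
  have hfae : f * a * e = a := InverseSemigroup.star_unique (e * f) (f * a * e) h1 h2
  have haa : a * a = a := by
    have : (f * a * e) * (f * a * e) = f * a * e := by
      calc (f * a * e) * (f * a * e) = f * (a * (e * f) * a) * e := by simp only [mul_assoc]
        _ = f * a * e := by rw [ha]
    rw [hfae] at this; exact this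
  have hef : e * f = a := by
    calc e * f = star (star (e * f)) := (isg_star_star _).symm
      _ = a := isg_idem_star haa
  rw [hef]; exact haa

lemma isg_idem_comm {e f : G} (he : e * e = e) (hf : f * f = f) : e * f = f * e := by
  have hef := isg_idem_mul he hf
  have hfe := isg_idem_mul hf he
  have h1 : (e * f) * (f * e) * (e * f) = e * f := by
    calc (e * f) * (f * e) * (e * f) = e * ((f * f) * (e * e)) * f := by simp only [mul_assoc]
      _ = e * (f * e) * f := by rw [hf, he]
      _ = (e * f) * (e * f) := by simp only [mul_assoc]
      _ = e * f := hef
  have h2 : (f * e) * (e * f) * (f * e) = f * e := by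
    calc (f * e) * (e * f) * (f * e) = f * ((e * e) * (f * f)) * e := by simp only [mul_assoc]
      _ = f * (e * f) * e := by rw [he, hf]
      _ = (f * e) * (f * e) := by simp only [mul_assoc]
      _ = f * e := hfe
  have := InverseSemigroup.star_unique (e * f) (f * e) h1 h2
  rw [this, isg_idem_star hef]

lemma isg_star_mul (s t : G) : star (s * t) = star t * star s := by
  have h1 : (s * t) * (star t * star s) * (s * t) = s * t := by
    calc (s * t) * (star t * star s) * (s * t)
        = s * ((t * star t) * (star s * s)) * t := by simp only [mul_assoc]
      _ = s * ((star s * s) * (t * star t)) * t := by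
          rw [isg_idem_comm (isg_mul_star_idem t) (isg_star_mul_idem s)]
      _ = (s * star s * s) * (t * star t * t) := by simp only [mul_assoc]
      _ = s * t := by rw [isg_sss, isg_sss]
  have h2 : (star t * star s) * (s * t) * (star t * star s) = star t * star s := by
    calc (star t * star s) * (s * t) * (star t * star s)
        = star t * ((star s * s) * (t * star t)) * star s := by simp only [mul_assoc]
      _ = star t * ((t * star t) * (star s * s)) * star s := by
          rw [isg_idem_comm (isg_star_mul_idem s) (isg_mul_star_idem t)]
      _ = (star t * t * star t) * (star s * s * star s) := by simp only [mul_assoc]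
      _ = star t * star s := by rw [isg_tst, isg_tst]
  exact (InverseSemigroup.star_unique (s * t) (star t * star s) h1 h2).symm

end Toolkit

section SGBasic

variable {G : Type u} [InverseSemigroup G]

lemma sg_mk_mul (x y : FreeSemigroup G) :
    ((x * y : FreeSemigroup G) : (expCon G).Quotient) = (x : (expCon G).Quotient) * y :=
  Con.coe_mul x y

lemma sg_rel {x y : FreeSemigroup G} (h : ExpRel G x y) :
    (x : (expCon G).Quotient) = (y : (expCon G).Quotient) :=
  (Con.eq (expCon G)).mpr (ConGen.Rel.of x y h)

lemma r1L (s t : G) : gen s * gen t * gen (star t) = gen ((s * t : G)) * gen (star t) := by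
  have h := sg_rel (ExpRel.rel1 s t)
  rw [sg_mk_mul, sg_mk_mul, sg_mk_mul] at h
  exact h

lemma r2L (s t : G) : gen (star s) * gen s * gen t = gen (star s) * gen ((s * t : G)) := by
  have h := sg_rel (ExpRel.rel2 s t)
  rw [sg_mk_mul, sg_mk_mul, sg_mk_mul] at h
  exact h

lemma r3L (s : G) : gen s * gen (star s) * gen s = gen s := by
  have h := sg_rel (ExpRel.rel3 s)
  rw [sg_mk_mul, sg_mk_mul] at h
  exact h

lemma r1p (s t : G) : gen s * (gen t * gen (star t)) = gen (s * t) * gen (star t) := by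
  rw [← mul_assoc, r1L]

lemma r2p (s t : G) : gen (star s) * (gen s * gen t) = gen (star s) * gen (s * t) := by
  rw [← mul_assoc, r2L]

lemma r3p (s : G) : gen s * (gen (star s) * gen s) = gen s := by
  rw [← mul_assoc, r3L]

lemma r1c (s t : G) (x : SG G) :
    gen s * (gen t * (gen (star t) * x)) = gen (s * t) * (gen (star t) * x) := by
  rw [← mul_assoc, ← mul_assoc, r1L, mul_assoc]

lemma r2c (s t : G) (x : SG G) :
    gen (star s) * (gen s * (gen t * x)) = gen (star s) * (gen (s * t) * x) := by
  rw [← mul_assoc, ← mul_assoc, r2L, mul_assoc]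

lemma r3c (s : G) (x : SG G) :
    gen s * (gen (star s) * (gen s * x)) = gen s * x := by
  rw [← mul_assoc, ← mul_assoc, r3L]

lemma D1p (a b : G) : gen a * gen b = gen a * (gen (star a) * gen (a * b)) := by
  rw [← r2p a b, ← mul_assoc, ← mul_assoc, r3L]

lemma D1c (a b : G) (x : SG G) :
    gen a * (gen b * x) = gen a * (gen (star a) * (gen (a * b) * x)) := by
  rw [← r2c a b x, r3c]

lemma D2p (a b : G) : gen a * gen b = gen (a * b) * (gen (star b) * gen b) := by
  rw [← r1c a b (gen b), r3p]

lemma D2c (a b : G) (x : SG G) :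
    gen a * (gen b * x) = gen (a * b) * (gen (star b) * (gen b * x)) := by
  rw [← r1c a b (gen b * x), r3c]

lemma eps_def (s : G) : eps s = gen s * gen (star s) := rfl

lemma eps_gen (a : G) : eps a * gen a = gen a := by
  rw [eps_def, mul_assoc, r3p]

lemma eps_idem (a : G) : eps a * eps a = eps a := by
  rw [eps_def, mul_assoc, ← mul_assoc (gen (star a)), ← mul_assoc (gen a), r3p]

lemma K1 (x y : G) : eps x * eps y = gen x * (gen (star x * y) * gen (star y)) := by
  rw [eps_def, eps_def, mul_assoc, ← mul_assoc (gen (star x)),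
    D1p (star x) y, isg_star_star, mul_assoc, mul_assoc, r3c]

end SGBasic

section SGCore

variable {G : Type u} [InverseSemigroup G]

lemma C1 (u v : G) : eps u * eps v = eps u * eps (u * star u * v) := by
  have h1 : star u * (u * star u * v) = star u * v := by
    simp only [← mul_assoc]; rw [isg_tst]
  have hw : star (u * star u * v) = star v * (u * star u) := by
    rw [isg_star_mul, isg_idem_star (isg_mul_star_idem u)]
  have h2 : (star u * v) * star (u * star u * v) = (star u * v) * star v := by
    rw [hw]
    calc (star u * v) * (star v * (u * star u))
        = star u * ((v * star v) * (u * star u)) := by simp only [mul_assoc]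
      _ = star u * ((u * star u) * (v * star v)) := by
          rw [isg_idem_comm (isg_mul_star_idem v) (isg_mul_star_idem u)]
      _ = (star u * u * star u) * (v * star v) := by simp only [mul_assoc]
      _ = star u * (v * star v) := by rw [isg_tst]
      _ = (star u * v) * star v := by simp only [mul_assoc]
  rw [K1, K1, h1, D1p (star u * v) (star v), D1p (star u * v) (star (u * star u * v)), h2]

lemma C1' (u v : G) : eps v * eps u = eps (u * star u * v) * eps u := by
  have hw : star (u * star u * v) = star v * (u * star u) := by
    rw [isg_star_mul, isg_idem_star (isg_mul_star_idem u)]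
  have h3 : star (u * star u * v) * u = star v * u := by
    rw [hw, mul_assoc, isg_sss]
  have h4 : (u * star u * v) * (star v * u) = v * (star v * u) := by
    calc (u * star u * v) * (star v * u)
        = (u * star u) * (v * star v) * u := by simp only [mul_assoc]
      _ = (v * star v) * (u * star u) * u := by
          rw [isg_idem_comm (isg_mul_star_idem u) (isg_mul_star_idem v)]
      _ = (v * star v) * u := by rw [mul_assoc, isg_sss]
      _ = v * (star v * u) := by rw [mul_assoc]
  rw [K1, K1, h3, D2c v (star v * u) (gen (star u)),
    D2c (u * star u * v) (star v * u) (gen (star u)), h4]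

lemma C4 {x y : G} (h : x * star x = y * star y) : eps x * eps y = eps y * eps x := by
  have h5 : x * (star x * y) = y := by rw [← mul_assoc, h, isg_sss]
  have h6 : (star x * y) * star y = star x := by
    rw [mul_assoc, ← h, ← mul_assoc, isg_tst]
  have h7 : star (star x * y) = star y * x := by rw [isg_star_mul, isg_star_star]
  calc eps x * eps y = gen x * (gen (star x * y) * gen (star y)) := K1 x y
    _ = gen (x * (star x * y)) * (gen (star (star x * y)) * (gen (star x * y) * gen (star y))) :=
        D2c x (star x * y) (gen (star y))
    _ = gen y * (gen (star (star x * y)) * gen ((star x * y) * star y)) := by rw [h5, r2p]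
    _ = gen y * (gen (star y * x) * gen (star x)) := by rw [h6, h7]
    _ = eps y * eps x := (K1 y x).symm

lemma eps_comm (u v : G) : eps u * eps v = eps v * eps u := by
  have hwu : star (u * star u * v) = star v * (u * star u) := by
    rw [isg_star_mul, isg_idem_star (isg_mul_star_idem u)]
  have hwv : star (v * star v * u) = star u * (v * star v) := by
    rw [isg_star_mul, isg_idem_star (isg_mul_star_idem v)]
  have hEu := isg_mul_star_idem u
  have hEv := isg_mul_star_idem v
  have hrangeu : (u * star u * v) * star (u * star u * v) = (u * star u) * (v * star v) := by
    rw [hwu]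
    calc (u * star u * v) * (star v * (u * star u))
        = (u * star u) * (v * star v) * (u * star u) := by simp only [mul_assoc]
      _ = (u * star u) * (u * star u) * (v * star v) := by
          rw [mul_assoc, isg_idem_comm hEv hEu, ← mul_assoc]
      _ = (u * star u) * (v * star v) := by rw [hEu]
  have hrangev : (v * star v * u) * star (v * star v * u) = (v * star v) * (u * star u) := by
    rw [hwv]
    calc (v * star v * u) * (star u * (v * star v))
        = (v * star v) * (u * star u) * (v * star v) := by simp only [mul_assoc]
      _ = (v * star v) * (v * star v) * (u * star u) := by
          rw [mul_assoc, isg_idem_comm hEu hEv, ← mul_assoc]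
      _ = (v * star v) * (u * star u) := by rw [hEv]
  have h8 : (u * star u * v) * star (u * star u * v) * u = v * star v * u := by
    rw [hrangeu, isg_idem_comm hEu hEv, mul_assoc, isg_sss]
  have h9 : (v * star v * u) * star (v * star v * u) * v = u * star u * v := by
    rw [hrangev, isg_idem_comm hEv hEu, mul_assoc, isg_sss]
  have hr : (v * star v * u) * star (v * star v * u) = (u * star u * v) * star (u * star u * v) := by
    rw [hrangeu, hrangev, isg_idem_comm hEv hEu]
  calc eps u * eps v = eps u * eps (u * star u * v) := C1 u v
    _ = eps ((u * star u * v) * star (u * star u * v) * u) * eps (u * star u * v) :=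
        C1' (u * star u * v) u
    _ = eps (v * star v * u) * eps (u * star u * v) := by rw [h8]
    _ = eps (u * star u * v) * eps (v * star v * u) := C4 hr
    _ = eps ((v * star v * u) * star (v * star v * u) * v) * eps (v * star v * u) := by rw [h9]
    _ = eps v * eps (v * star v * u) := (C1' (v * star v * u) v).symm
    _ = eps v * eps u := (C1 v u).symm

lemma I3 {t : G} (ht : t * t = t) (p : G) :
    eps p * (eps (t * p) * gen t) = eps p * gen t := by
  have hst : star t = t := isg_idem_star ht
  have h10 : star (t * p) = star p * t := by rw [isg_star_mul, hst]
  have h11 : star (star p * t) = t * p := by rw [isg_star_mul, hst, isg_star_star]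
  have h12 : (star p * t) * t = star p * t := by rw [mul_assoc, ht]
  have hA : gen ((star p * t : G)) * gen t = gen ((star p * t : G)) := by
    have h := r3p (star p * t)
    rw [h11] at h
    rw [D1p (star p * t) t, h11, h12, h]
  have h13 : (star p * (t * p)) * (star p * t) = star p * t := by
    calc (star p * (t * p)) * (star p * t)
        = star p * (t * (p * star p) * t) := by simp only [mul_assoc]
      _ = star p * ((p * star p) * t * t) := by rw [isg_idem_comm ht (isg_mul_star_idem p)]
      _ = star p * ((p * star p) * t) := by rw [mul_assoc ((p : G) * star p), ht]
      _ = (star p * p * star p) * t := by simp only [mul_assoc]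
      _ = star p * t := by rw [isg_tst]
  have hB : gen ((star p * (t * p) : G)) * gen ((star p * t : G)) = gen ((star p * t : G)) := by
    have h := r3p (star p * t)
    rw [h11] at h
    rw [D2p (star p * (t * p)) (star p * t), h13, h11, h]
  calc eps p * (eps (t * p) * gen t)
      = gen p * (gen (star p) * (gen (t * p) * (gen (star (t * p)) * gen t))) := by
        simp only [eps_def, mul_assoc]
    _ = gen p * (gen (star p) * (gen (t * p) * (gen (star p * t) * gen t))) := by rw [h10]
    _ = gen p * (gen (star p) * (gen (t * p) * gen (star p * t))) := by rw [hA]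
    _ = gen p * (gen (star p) * (gen p * (gen (star p * (t * p)) * gen (star p * t)))) := by
        rw [D1c (star p) (t * p) (gen (star p * t)), isg_star_star]
    _ = gen p * (gen (star p * (t * p)) * gen (star p * t)) := by rw [r3c]
    _ = gen p * gen (star p * t) := by rw [hB]
    _ = eps p * gen t := by rw [eps_def, mul_assoc, D1p (star p) t, isg_star_star, r3c]

end SGCore

section SGSigma

variable {G : Type u} [InverseSemigroup G]

lemma expCon_le_ker :
    expCon G ≤ Con.ker (FreeSemigroup.lift (id : G → G)) := by
  apply Con.conGen_le.mpr
  intro x y h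
  cases h with
  | rel1 s t =>
      show FreeSemigroup.lift (id : G → G) _ = FreeSemigroup.lift (id : G → G) _
      simp only [map_mul, FreeSemigroup.lift_of, id_eq]
  | rel2 s t =>
      show FreeSemigroup.lift (id : G → G) _ = FreeSemigroup.lift (id : G → G) _
      simp only [map_mul, FreeSemigroup.lift_of, id_eq, mul_assoc]
  | rel3 s =>
      show FreeSemigroup.lift (id : G → G) _ = FreeSemigroup.lift (id : G → G) _
      simp only [map_mul, FreeSemigroup.lift_of, id_eq]
      exact isg_sss s

/-- The canonical projection σ : S(G) → G. -/
def sgm : SG G → G := fun x =>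
  Con.liftOn x (fun w => FreeSemigroup.lift (id : G → G) w)
    (fun a b hab => expCon_le_ker hab)

lemma sgm_gen (s : G) : sgm (gen s) = s := rfl

lemma sgm_mul (x y : SG G) : sgm (x * y) = sgm x * sgm y := by
  induction x using Con.induction_on with
  | H a =>
    induction y using Con.induction_on with
    | H b =>
      show sgm ((a : (expCon G).Quotient) * (b : (expCon G).Quotient)) = _
      rw [← sg_mk_mul]
      show FreeSemigroup.lift (id : G → G) (a * b) = _
      rw [map_mul]
      rfl

end SGSigma

section SGWords

variable {G : Type u} [InverseSemigroup G]

/-- The product [a][s₁]⋯[sₙ] in S(G). -/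
def genProdAux (a : G) (l : List G) : SG G := l.foldl (fun x s => x * gen s) (gen a)

/-- The product a·s₁⋯sₙ in G. -/
def prodAux (a : G) (l : List G) : G := l.foldl (· * ·) a

/-- The proper prefix products of the word a·s₁⋯sₙ. -/
def prefListAux (a : G) : List G → List G
  | [] => []
  | s :: l => a :: prefListAux (a * s) l

lemma foldl_mul (l : List G) : ∀ z y : SG G,
    z * l.foldl (fun x s => x * gen s) y = l.foldl (fun x s => x * gen s) (z * y) := by
  induction l with
  | nil => intro z y; rfl
  | cons s l ih => intro z y; simp only [List.foldl_cons]; rw [ih, mul_assoc]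

lemma genProdAux_mul (a b : G) (l m : List G) :
    genProdAux a l * genProdAux b m = genProdAux a (l ++ b :: m) := by
  unfold genProdAux
  rw [List.foldl_append, List.foldl_cons, foldl_mul]

lemma sgm_foldl (l : List G) : ∀ y : SG G,
    sgm (l.foldl (fun x s => x * gen s) y) = prodAux (sgm y) l := by
  induction l with
  | nil => intro y; rfl
  | cons s l ih =>
    intro y
    simp only [List.foldl_cons, prodAux]
    rw [ih, sgm_mul, sgm_gen]
    rfl

lemma sgm_genProdAux (a : G) (l : List G) : sgm (genProdAux a l) = prodAux a l := by
  unfold genProdAux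
  rw [sgm_foldl, sgm_gen]

lemma exists_word (x : SG G) : ∃ (a : G) (l : List G), x = genProdAux a l := by
  induction x using Con.induction_on with
  | H w =>
    induction w with
    | ih1 s => exact ⟨s, [], rfl⟩
    | ih2 s y _ ihy =>
      obtain ⟨b, m, hb⟩ := ihy
      refine ⟨s, b :: m, ?_⟩
      rw [sg_mk_mul, hb]
      exact genProdAux_mul s b [] m

lemma epsList_append (l m : List G) (x : SG G) :
    epsList (l ++ m) x = epsList l (epsList m x) := by
  unfold epsList
  rw [List.map_append, List.foldr_append]

lemma epsList_mul (l : List G) : ∀ (x z : SG G), epsList l x * z = epsList l (x * z) := by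
  induction l with
  | nil => intro x z; rfl
  | cons p l ih =>
    intro x z
    show (eps p * epsList l x) * z = eps p * epsList l (x * z)
    rw [mul_assoc, ih]

lemma eps_epsList (l : List G) : ∀ (a : G) (x : SG G),
    eps a * epsList l x = epsList l (eps a * x) := by
  induction l with
  | nil => intro a x; rfl
  | cons p l ih =>
    intro a x
    show eps a * (eps p * epsList l x) = eps p * epsList l (eps a * x)
    rw [← mul_assoc, eps_comm, mul_assoc, ih]

lemma prodAux_append (a : G) (l m : List G) :
    prodAux a (l ++ m) = prodAux (prodAux a l) m :=
  List.foldl_append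

lemma prodAux_mul (c : G) (l : List G) : ∀ a : G, prodAux (c * a) l = c * prodAux a l := by
  induction l with
  | nil => intro a; rfl
  | cons s l ih =>
    intro a
    show prodAux (c * a * s) l = c * prodAux (a * s) l
    rw [mul_assoc, ih]

lemma prefListAux_append (l : List G) : ∀ (a : G) (m : List G),
    prefListAux a (l ++ m) = prefListAux a l ++ prefListAux (prodAux a l) m := by
  induction l with
  | nil => intro a m; rfl
  | cons s l ih =>
    intro a m
    show a :: prefListAux (a * s) (l ++ m) = (a :: prefListAux (a * s) l) ++ _
    rw [ih, List.cons_append]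
    rfl

lemma prefListAux_map (c : G) (l : List G) : ∀ a : G,
    prefListAux (c * a) l = (prefListAux a l).map (fun x => c * x) := by
  induction l with
  | nil => intro a; rfl
  | cons s l ih =>
    intro a
    show (c * a) :: prefListAux (c * a * s) l = (c * a) :: (prefListAux (a * s) l).map _
    rw [mul_assoc, ih]

lemma D1e (a b : G) : gen a * gen b = eps a * gen (a * b) := by
  rw [D1p, eps_def, mul_assoc]

lemma genProdAux_eq (a : G) (l : List G) :
    genProdAux a l = epsList (prefListAux a l) (gen (prodAux a l)) := by
  induction l using List.reverseRecOn with
  | nil => rfl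
  | append_singleton l s ih =>
    have h1 : genProdAux a (l ++ [s]) = genProdAux a l * gen s := by
      unfold genProdAux
      rw [List.foldl_append]
      rfl
    have h2 : prefListAux a (l ++ [s]) = prefListAux a l ++ [prodAux a l] := by
      rw [prefListAux_append]
      rfl
    have h3 : prodAux a (l ++ [s]) = prodAux a l * s := by
      rw [prodAux_append]
      rfl
    rw [h1, ih, h2, h3, epsList_mul, D1e, epsList_append]
    rfl

lemma absorb {t : G} (ht : t * t = t) :
    ∀ P : List G, epsList (P ++ t :: P.map (fun x => t * x)) (gen t) = epsList P (gen t) := by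
  intro P
  induction P with
  | nil => exact eps_gen t
  | cons p P ih =>
    show eps p * epsList (P ++ t :: (t * p) :: P.map (fun x => t * x)) (gen t)
        = eps p * epsList P (gen t)
    have hsplit : P ++ t :: (t * p) :: P.map (fun x => t * x)
        = (P ++ [t]) ++ ((t * p) :: P.map (fun x => t * x)) := by simp
    rw [hsplit, epsList_append]
    have e1 : epsList ((t * p) :: P.map (fun x => t * x)) (gen t)
        = epsList (P.map (fun x => t * x)) (eps (t * p) * gen t) :=
      eps_epsList _ _ _
    rw [e1, ← epsList_append, eps_epsList, I3 ht p, ← eps_epsList]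
    have hlist : (P ++ [t]) ++ P.map (fun x => t * x) = P ++ t :: P.map (fun x => t * x) := by
      simp
    rw [hlist, ih]

lemma sg_pure (x : SG G) (h : sgm x * sgm x = sgm x) : x * x = x := by
  obtain ⟨a, l, rfl⟩ := exists_word x
  rw [sgm_genProdAux] at h
  have hxx : genProdAux a l * genProdAux a l = genProdAux a (l ++ a :: l) :=
    genProdAux_mul a a l l
  have hpl : prefListAux a (l ++ a :: l)
      = prefListAux a l ++ prodAux a l :: (prefListAux a l).map (fun x => prodAux a l * x) := by
    rw [prefListAux_append]
    show _ ++ prodAux a l :: prefListAux (prodAux a l * a) l = _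
    rw [prefListAux_map]
  have hpr : prodAux a (l ++ a :: l) = prodAux a l := by
    rw [prodAux_append]
    show prodAux (prodAux a l * a) l = _
    rw [prodAux_mul, h]
  rw [hxx, genProdAux_eq a (l ++ a :: l), hpl, hpr, absorb h, ← genProdAux_eq]

lemma sg_idem_gen {t : G} (ht : t * t = t) : gen t * gen t = gen t := by
  have hst : star t = t := isg_idem_star ht
  have h := r2L (star t) t
  rw [isg_star_star, hst, ht] at h
  have h3 := r3L t
  rw [hst] at h3
  rw [← h]
  exact h3

end SGWords


theorem SG_EUnitary_iff (G : Type u) [InverseSemigroup G] :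
    (∀ e x : SG G, e * e = e → (e * x) * (e * x) = e * x → x * x = x) ↔
    (∀ e s : G, e * e = e → (e * s) * (e * s) = e * s → s * s = s) := by
  constructor
  · -- S(G) E-unitary → G E-unitary
    intro hS e s he hes
    have hse : star e = e := isg_idem_star he
    have hE : (gen e * gen e) * (gen e * gen e) = gen e * gen e := by
      have h3 := r3L (e : G)
      rw [hse] at h3
      calc (gen e * gen e) * (gen e * gen e)
          = (gen e * gen e * gen e) * gen e := by simp only [mul_assoc]
        _ = gen e * gen e := by rw [h3]
    have hef : e * (e * s) = e * s := by rw [← mul_assoc, he]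
    have hEX : gen e * gen e * gen s = gen ((e * s : G)) := by
      have h2 := r2L (e : G) s
      rw [hse] at h2
      rw [h2]
      calc gen e * gen ((e * s : G))
          = gen e * (gen ((e * s : G)) * gen (star (e * s)) * gen ((e * s : G))) := by
            rw [r3L]
        _ = gen e * gen ((e * s : G)) * gen (star (e * s)) * gen ((e * s : G)) := by
            simp only [mul_assoc]
        _ = gen ((e * (e * s) : G)) * gen (star (e * s)) * gen ((e * s : G)) := by rw [r1L]
        _ = gen ((e * s : G)) * gen (star (e * s)) * gen ((e * s : G)) := by rw [hef]
        _ = gen ((e * s : G)) := r3L (e * s)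
    have hfidem : gen ((e * s : G)) * gen ((e * s : G)) = gen ((e * s : G)) := sg_idem_gen hes
    have hXidem : gen s * gen s = gen s := by
      apply hS (gen e * gen e) (gen s) hE
      rw [hEX]
      exact hfidem
    have := congrArg sgm hXidem
    rw [sgm_mul, sgm_gen] at this
    exact this
  · -- G E-unitary → S(G) E-unitary
    intro hG E X hE hEX
    apply sg_pure
    apply hG (sgm E) (sgm X)
    · rw [← sgm_mul, hE]
    · rw [← sgm_mul, ← sgm_mul, hEX]
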